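/- arXiv:1303.0626 — 2 statements merged into one kernel-verified Lean document; each statement's English description precedes it below -/
import Mathlib

section
/- Let a and b be two distinct complex numbers. There is no polynomial f ∈ ℂ[X] of degree greater than 2 such that for all z ∈ ℂ, f'(z) = a implies f(z) = a and f'(z) = b implies f(z) = b. That is, if p is a polynomial with deg p ≥ 3, then there exists z ∈ ℂ with p'(z) = a and p(z) ≠ a, or there exists z ∈ ℂ with p'(z) = b and p(z) ≠ b. -/
/-!
If `p' = t` forces `p = t`, every root of `p' - t` is a root of `p - p'`, and a root of
multiplicity `μ` of `p' - t` is a root of multiplicity `μ - 1` of `p''`; so `p' - t` divides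
`p'' (p - p')`. For `a ≠ b` the polynomials `p' - a` and `p' - b` are coprime, and both sides of
`(p' - a)(p' - b) ∣ p'' (p - p')` have degree `2n - 2`, so `p'' (p - p') = k (p' - a)(p' - b)`.
The coefficients of `z^(2n-2)` force `k = (n - 1)/n`, and then those of `z^(2n-3)` reduce to
`n² (n - 1) c² = 0`, where `c` is the leading coefficient of `p`.
-/

open Polynomial

namespace Polynomial

theorem coeff_mul_add_one_of_natDegree_le {R : Type*} [Semiring R] {f g : R[X]} {m n : ℕ}
    (hf : f.natDegree ≤ m + 1) (hg : g.natDegree ≤ n + 1) :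
    (f * g).coeff (m + n + 1) = f.coeff (m + 1) * g.coeff n + f.coeff m * g.coeff (n + 1) := by
  rw [coeff_mul, Finset.sum_eq_add_of_mem (m + 1, n) (m, n + 1) (by simp; omega) (by simp; omega)
    (by simp)]
  rintro ⟨i, j⟩ hij hne
  simp only [Finset.HasAntidiagonal.mem_antidiagonal, ne_eq, Prod.mk.injEq] at hij hne
  rcases lt_or_ge (m + 1) i with hi | hi
  · rw [coeff_eq_zero_of_natDegree_lt (hf.trans_lt hi), zero_mul]
  · rw [coeff_eq_zero_of_natDegree_lt (hg.trans_lt (by omega)), mul_zero]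

theorem exists_eq_C_mul_of_dvd_of_natDegree_le {R : Type*} [CommSemiring R] [NoZeroDivisors R]
    {f g : R[X]} (hfg : f ∣ g) (hdeg : g.natDegree ≤ f.natDegree) : ∃ k, g = C k * f := by
  obtain ⟨q, rfl⟩ := hfg
  rcases eq_or_ne f 0 with rfl | hf
  · exact ⟨0, by simp⟩
  rcases eq_or_ne q 0 with rfl | hq
  · exact ⟨0, by simp⟩
  rw [natDegree_mul hf hq] at hdeg
  exact ⟨q.coeff 0, by rw [mul_comm, ← eq_C_of_natDegree_eq_zero (by omega)]⟩

theorem isCoprime_sub_C_sub_C {K : Type*} [Field K] (q : K[X]) {a b : K} (hab : a ≠ b) :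
    IsCoprime (q - C a) (q - C b) := by
  simpa using (isCoprime_X_sub_C_of_isUnit_sub (sub_ne_zero.2 hab).isUnit).map (compRingHom q)

section CharZero

variable {K : Type*} [Field K] [CharZero K]

theorem dvd_derivative_mul_of_forall_isRoot [IsAlgClosed K] {f g : K[X]}
    (h : ∀ x, f.IsRoot x → g.IsRoot x) : f ∣ derivative f * g := by
  rcases eq_or_ne f 0 with rfl | hf
  · simp
  · exact (isRoot_of_isRoot_iff_dvd_derivative_mul hf).1 h

theorem derivative_sub_C_dvd_of_forall_eval_eq [IsAlgClosed K] {p : K[X]} {t : K}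
    (h : ∀ z, (derivative p).eval z = t → p.eval z = t) :
    derivative p - C t ∣ derivative (derivative p) * (p - derivative p) := by
  simpa using dvd_derivative_mul_of_forall_isRoot (f := derivative p - C t) (g := p - derivative p)
    (by simp +contextual [sub_eq_zero, h])

theorem natDegree_le_two_of_derivative_mul_sub_derivative_eq {p : K[X]} {k a b : K}
    (h : derivative (derivative p) * (p - derivative p) =
      C k * ((derivative p - C a) * (derivative p - C b))) :
    p.natDegree ≤ 2 := by
  by_contra! hp
  obtain ⟨m, hm⟩ : ∃ m, p.natDegree = m + 3 := ⟨p.natDegree - 3, by omega⟩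
  have hc : p.coeff (m + 3) ≠ 0 := by
    simpa [← hm] using ne_zero_of_natDegree_gt hp
  have hm3 : (m : K) + 3 ≠ 0 := by exact_mod_cast Nat.succ_ne_zero (m + 2)
  have hm2 : (m : K) + 2 ≠ 0 := by exact_mod_cast Nat.succ_ne_zero (m + 1)
  have hp4 : p.coeff (m + 4) = 0 := coeff_eq_zero_of_natDegree_lt (by omega)
  have hd1 : (derivative p).natDegree ≤ m + 2 := by simp [hm]
  have hd2 : (derivative (derivative p)).natDegree ≤ m + 1 := by simp [hm]
  have hsub : (p - derivative p).natDegree ≤ m + 3 :=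
    (natDegree_sub_le _ _).trans (max_le hm.le (by omega))
  have hsubC (t : K) : (derivative p - C t).natDegree ≤ m + 2 := by rwa [natDegree_sub_C]
  have top := congrArg (coeff · ((m + 1) + (m + 3))) h
  have next := congrArg (coeff · (m + (m + 2) + 1)) h
  simp only [coeff_C_mul] at top next
  rw [coeff_mul_add_eq_of_natDegree_le hd2 hsub,
    show (m + 1) + (m + 3) = (m + 2) + (m + 2) by omega,
    coeff_mul_add_eq_of_natDegree_le (hsubC a) (hsubC b)] at top
  rw [coeff_mul_add_one_of_natDegree_le hd2 hsub,
    show m + (m + 2) + 1 = (m + 1) + (m + 1) + 1 by omega,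
    coeff_mul_add_one_of_natDegree_le (hsubC a) (hsubC b)] at next
  simp only [coeff_derivative, coeff_sub, coeff_C, add_assoc] at top next
  norm_num [hp4] at top next
  have hk : k * ((m : K) + 3) = (m : K) + 2 := by
    refine mul_left_cancel₀ (mul_ne_zero (mul_ne_zero hc hc) hm3) ?_
    linear_combination -top
  have : p.coeff (m + 3) ^ 2 * ((m : K) + 3) ^ 2 * ((m : K) + 2) = 0 := by
    linear_combination -next - 2 * p.coeff (m + 3) * p.coeff (m + 2) * ((m : K) + 2) * hk
  simp [hc, hm2, hm3] at this

end CharZero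

end Polynomial

/-- **Lemma 4.2.** Let `a ≠ b` be complex numbers. No polynomial `p` of degree
greater than `2` satisfies `p'(z) = a ⟹ p(z) = a` and `p'(z) = b ⟹ p(z) = b`
for all `z ∈ ℂ`. -/
theorem stmt_15 (a b : ℂ) (hab : a ≠ b) (p : Polynomial ℂ)
    (hdeg : 3 ≤ p.natDegree) :
    (∃ z : ℂ, (Polynomial.derivative p).eval z = a ∧ p.eval z ≠ a) ∨
    (∃ z : ℂ, (Polynomial.derivative p).eval z = b ∧ p.eval z ≠ b) := by
  by_contra! ⟨ha, hb⟩
  have hsubC (t : ℂ) : derivative p - C t ≠ 0 :=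
    ne_zero_of_natDegree_gt (n := 0) (by rw [natDegree_sub_C, natDegree_derivative]; omega)
  have hdvd := (isCoprime_sub_C_sub_C (derivative p) hab).mul_dvd
    (derivative_sub_C_dvd_of_forall_eval_eq ha) (derivative_sub_C_dvd_of_forall_eval_eq hb)
  obtain ⟨k, hk⟩ := exists_eq_C_mul_of_dvd_of_natDegree_le hdvd <| by
    rw [natDegree_mul (hsubC a) (hsubC b), natDegree_sub_C, natDegree_sub_C, natDegree_derivative]
    calc _ ≤ (derivative (derivative p)).natDegree + (p - derivative p).natDegree :=
          natDegree_mul_le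
      _ ≤ (p.natDegree - 2) + p.natDegree := by
          gcongr
          · rw [natDegree_derivative, natDegree_derivative]; omega
          · exact (natDegree_sub_le _ _).trans (max_le le_rfl
              ((natDegree_derivative_le p).trans (Nat.sub_le _ _)))
      _ = _ := by omega
  have := natDegree_le_two_of_derivative_mul_sub_derivative_eq hk
  omega
end

section
/- Let c be a nonzero complex number, β a nonzero complex number, and define the entire function f(z) = (4c³/(27β²))·exp((2/3)z) + β·exp(−(1/3)z). Then there exists z₀ ∈ ℂ with f'(z₀) = c and f(z₀) = (√6 − 1/2)·c ≠ c; in particular f and f' do not share the value c IM. -/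
/-!
Put `u = exp(-z/3)`, so that `f = A/u² + βu` and `f' = (2/3)·A/u² − βu/3` with
`A = 4c³/(27β²)`. Both depend on `u` only through `y = βu`, since `A/u² = 4c³/(27y²)`, and
`exp(-z/3)` takes every nonzero value. Choosing `y = (2√6 − 4)c/3` gives
`A/u² = (5 + 2√6)c/6`, hence `f' = c` and `f = (√6 − 1/2)c`, which differs from `c`.
-/

open Complex

lemma exists_cexp_neg_third_eq {u : ℂ} (hu : u ≠ 0) :
    ∃ z : ℂ, cexp (-(1 / 3) * z) = u ∧ cexp (2 / 3 * z) = (u ^ 2)⁻¹ := by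
  refine ⟨-3 * log u, ?_, ?_⟩
  · rw [show -(1 / 3 : ℂ) * (-3 * log u) = log u by ring, exp_log hu]
  · rw [show (2 / 3 : ℂ) * (-3 * log u) = -((2 : ℕ) * log u) by push_cast; ring,
      exp_neg, exp_nat_mul, exp_log hu]

lemma hasDerivAt_mul_cexp_add_mul_cexp (a b z : ℂ) :
    HasDerivAt (fun z => a * cexp (2 / 3 * z) + b * cexp (-(1 / 3) * z))
      (2 / 3 * a * cexp (2 / 3 * z) - 1 / 3 * b * cexp (-(1 / 3) * z)) z := by
  have h₁ := ((hasDerivAt_id' z).const_mul (2 / 3 : ℂ)).cexp.const_mul a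
  have h₂ := ((hasDerivAt_id' z).const_mul (-(1 / 3) : ℂ)).cexp.const_mul b
  exact (h₁.add h₂).congr_deriv (by ring)

lemma two_mul_sub_four_ne_zero {s : ℂ} (hs : s ^ 2 = 6) : 2 * s - 4 ≠ 0 := by
  intro h
  have : s = 2 := by linear_combination h / 2
  norm_num [this] at hs

lemma four_mul_cube_div_sq_eq {s c y : ℂ} (hs : s ^ 2 = 6) (hc : c ≠ 0)
    (hy : 3 * y = (2 * s - 4) * c) :
    4 * c ^ 3 / (27 * y ^ 2) = (5 + 2 * s) * c / 6 := by
  have hy₀ : y ≠ 0 := by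
    rintro rfl
    exact mul_ne_zero (two_mul_sub_four_ne_zero hs) hc (by linear_combination -hy)
  rw [div_eq_iff (mul_ne_zero (by norm_num) (pow_ne_zero 2 hy₀))]
  -- `(5 + 2s)(2s − 4)² = 8` once `s² = 6`
  linear_combination (6 - 4 * s) * c ^ 3 * hs
    - (5 + 2 * s) * c * (3 * y + (2 * s - 4) * c) / 2 * hy

/-- **Proof of Theorem 2.2 (key computation).** For nonzero `c, β ∈ ℂ`, the
entire function `f(z) = (4c³/(27β²))·exp((2/3)z) + β·exp(−(1/3)z)` has a point
`z₀` with `f'(z₀) = c` but `f(z₀) = (√6 − 1/2)·c ≠ c`; in particular `f` and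
`f'` do not share the value `c` IM. -/
theorem stmt_17 (c β : ℂ) (hc : c ≠ 0) (hβ : β ≠ 0)
    (f : ℂ → ℂ)
    (hf : ∀ z : ℂ, f z = 4 * c ^ 3 / (27 * β ^ 2) * Complex.exp (2 / 3 * z)
      + β * Complex.exp (-(1 / 3) * z)) :
    (∃ z₀ : ℂ, deriv f z₀ = c ∧
      f z₀ = ((Real.sqrt 6 : ℂ) - 1 / 2) * c ∧ f z₀ ≠ c) ∧
    ¬ (∀ z : ℂ, f z = c ↔ deriv f z = c) := by
  set s : ℂ := (Real.sqrt 6 : ℂ)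
  have hs : s ^ 2 = 6 := by
    rw [← ofReal_pow, Real.sq_sqrt (by norm_num)]
    norm_num
  have hu₀ : (2 * s - 4) * c / (3 * β) ≠ 0 :=
    div_ne_zero (mul_ne_zero (two_mul_sub_four_ne_zero hs) hc) (mul_ne_zero three_ne_zero hβ)
  obtain ⟨z₀, hu, hu2⟩ := exists_cexp_neg_third_eq hu₀
  have hy : 3 * (β * cexp (-(1 / 3) * z₀)) = (2 * s - 4) * c := by
    rw [hu]
    field_simp
  have hA : 4 * c ^ 3 / (27 * β ^ 2) * cexp (2 / 3 * z₀) = (5 + 2 * s) * c / 6 := by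
    rw [← four_mul_cube_div_sq_eq hs hc hy, hu2, ← hu, mul_pow]
    field_simp
  have hf' : deriv f z₀ = c := by
    rw [show f = _ from funext hf, (hasDerivAt_mul_cexp_add_mul_cexp _ _ z₀).deriv]
    linear_combination 2 / 3 * hA - 1 / 9 * hy
  have hfz₀ : f z₀ = (s - 1 / 2) * c := by
    rw [hf]
    linear_combination hA + 1 / 3 * hy
  have hne : f z₀ ≠ c := by
    rw [hfz₀]
    intro h
    have : s = 3 / 2 := by linear_combination mul_right_cancel₀ hc (h.trans (one_mul c).symm)
    norm_num [this] at hs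
  exact ⟨⟨z₀, hf', hfz₀, hne⟩, fun h => hne ((h z₀).mpr hf')⟩
end
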